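/- arXiv:1810.13174 — 2 statements merged into one kernel-verified Lean document; each statement's English description precedes it below -/
import Mathlib

section
/- For every Fourier frequency k with ω/Cp < k < ω/Cs (where admissibility k² ± λ₁λ₂ ≠ 0 holds), there exists δ₀ > 0 such that for all overlaps δ with 0 < δ < δ₀, the convergence factor of the classical Schwarz method satisfies ρ_cla(k, ω, Cp, Cs, δ) > 1; i.e., the overlapping classical Schwarz method applied to the time-harmonic Navier equations diverges on the intermediate frequencies. -/
open Complex

/-- The convergence factor `ρ_cla(k, ω, Cp, Cs, δ) = max(|r₊|, |r₋|)` of the classical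
Schwarz method for the time-harmonic Navier equations, where
`r± = X²/2 + e^{−δ(λ₁+λ₂)} ± (1/2)√(X²(X² + 4e^{−δ(λ₁+λ₂)}))`,
`X = ((k² + λ₁λ₂)/(k² − λ₁λ₂))(e^{−λ₁δ} − e^{−λ₂δ})`,
`λ₁ = √(k² − ω²/Cs²)`, `λ₂ = √(k² − ω²/Cp²)` (principal complex square roots). -/
noncomputable def rhoCla (Cp Cs ω k δ : ℝ) : ℝ :=
  let l1 : ℂ := ((k ^ 2 - ω ^ 2 / Cs ^ 2 : ℝ) : ℂ) ^ (1 / 2 : ℂ)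
  let l2 : ℂ := ((k ^ 2 - ω ^ 2 / Cp ^ 2 : ℝ) : ℂ) ^ (1 / 2 : ℂ)
  let X : ℂ := ((k : ℂ) ^ 2 + l1 * l2) / ((k : ℂ) ^ 2 - l1 * l2)
      * (Complex.exp (-l1 * δ) - Complex.exp (-l2 * δ))
  let E : ℂ := Complex.exp (-(δ : ℂ) * (l1 + l2))
  let s : ℂ := (X ^ 2 * (X ^ 2 + 4 * E)) ^ (1 / 2 : ℂ)
  max (‖X ^ 2 / 2 + E + s / 2‖) (‖X ^ 2 / 2 + E - s / 2‖)

/-!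
The numbers `r± = X²/2 + E ± s/2` are the roots of `r² - (X² + 2E) r + E²`, so `r₊ r₋ = E²`,
and by the parallelogram law `|r₊|² + |r₋|² = 2|X²/2 + E|² + |s|²/2`. If both had modulus at
most `1`, then `(1 - |r₊|²)(1 - |r₋|²) ≥ 0`, i.e. `|r₊|² + |r₋|² ≤ 1 + |E|⁴`. Using
`|X² + 4E| ≥ 4|E| - |X|²`, this is contradicted once `(1 - |E|²)² < 2 Re(X² Ē) + 2|X|²|E|`.
As `δ → 0`, `X(δ) ≈ c(λ₂ - λ₁)δ` and `|E(δ)| = e^{-Re(λ₁+λ₂)δ}`, so after division by `δ²`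
the two sides tend to `4 Re(λ₁+λ₂)²` and `4 Re(c(λ₂ - λ₁))²`. For intermediate frequencies,
`λ₁ = ia` and `λ₂ = b` with `a > 0` and `0 < b < k`, and
`Re(c(b - ia)) - b = 2a²b(k² - b²)/(k⁴ + a²b²) > 0`.
-/

open ComplexConjugate Filter Topology

theorem one_lt_max_of_one_add_sq_mul_lt {x y : ℝ} (hx : 0 ≤ x) (hy : 0 ≤ y)
    (h : 1 + (x * y) ^ 2 < x ^ 2 + y ^ 2) : 1 < max x y := by
  by_contra! hle
  have hx1 : x ^ 2 ≤ 1 := pow_le_one₀ hx ((le_max_left x y).trans hle)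
  have hy1 : y ^ 2 ≤ 1 := pow_le_one₀ hy ((le_max_right x y).trans hle)
  nlinarith [mul_nonneg (sub_nonneg.2 hx1) (sub_nonneg.2 hy1)]

theorem one_lt_max_norm_roots {X E s : ℂ} (hs : s ^ 2 = X ^ 2 * (X ^ 2 + 4 * E))
    (h : (1 - ‖E‖ ^ 2) ^ 2 < 2 * (X ^ 2 * conj E).re + 2 * ‖X‖ ^ 2 * ‖E‖) :
    1 < max ‖X ^ 2 / 2 + E + s / 2‖ ‖X ^ 2 / 2 + E - s / 2‖ := by
  set A := X ^ 2 / 2 + E with hA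
  have hprod : (A + s / 2) * (A - s / 2) = E ^ 2 := by linear_combination (-1 / 4 : ℂ) * hs
  have hpar : ‖A + s / 2‖ ^ 2 + ‖A - s / 2‖ ^ 2 = 2 * ‖A‖ ^ 2 + 2 * ‖s / 2‖ ^ 2 := by
    simp only [sq]
    linarith [parallelogram_law_with_norm ℝ A (s / 2)]
  have hnA : ‖A‖ ^ 2 = ‖X‖ ^ 4 / 4 + ‖E‖ ^ 2 + (X ^ 2 * conj E).re := by
    rw [hA, Complex.sq_norm, normSq_add, ← Complex.sq_norm, ← Complex.sq_norm, norm_div,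
      norm_pow, norm_ofNat, div_mul_eq_mul_div, div_ofNat_re]
    ring
  have hns : ‖s / 2‖ ^ 2 = ‖X‖ ^ 2 * ‖X ^ 2 + 4 * E‖ / 4 := by
    rw [← norm_pow, div_pow, hs, norm_div, norm_mul, norm_pow]
    norm_num
  have htri : 4 * ‖E‖ - ‖X‖ ^ 2 ≤ ‖X ^ 2 + 4 * E‖ := by
    have := norm_sub_le (X ^ 2 + 4 * E) (X ^ 2)
    rw [add_sub_cancel_left, norm_mul, norm_pow] at this
    norm_num at this
    linarith
  apply one_lt_max_of_one_add_sq_mul_lt (norm_nonneg _) (norm_nonneg _)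
  rw [← norm_mul, hprod, norm_pow, hpar, hnA, hns]
  nlinarith [mul_le_mul_of_nonneg_left htri (sq_nonneg ‖X‖)]

theorem eventually_sq_one_sub_sq_norm_lt {X E : ℝ → ℂ} {w : ℂ} {β : ℝ}
    (hX : HasDerivAt X w 0) (hX0 : X 0 = 0) (hE : ContinuousAt E 0) (hE0 : E 0 = 1)
    (hnE : HasDerivAt (fun δ => ‖E δ‖) β 0) (hβ : β ^ 2 < w.re ^ 2) :
    ∀ᶠ δ in 𝓝[≠] 0,
      (1 - ‖E δ‖ ^ 2) ^ 2 < 2 * (X δ ^ 2 * conj (E δ)).re + 2 * ‖X δ‖ ^ 2 * ‖E δ‖ := by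
  have hXs : Tendsto (fun δ : ℝ => X δ / δ) (𝓝[≠] 0) (𝓝 w) := by
    refine (hasDerivAt_iff_tendsto_slope.mp hX).congr fun δ => ?_
    simp [slope_def_module, hX0, div_eq_inv_mul, Complex.real_smul]
  have hnEs : Tendsto (fun δ : ℝ => (‖E δ‖ - 1) / δ) (𝓝[≠] 0) (𝓝 β) := by
    refine (hasDerivAt_iff_tendsto_slope.mp hnE).congr fun δ => ?_
    simp [slope_def_field, hE0]
  have hE' : Tendsto E (𝓝[≠] 0) (𝓝 1) := hE0 ▸ hE.tendsto.mono_left nhdsWithin_le_nhds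
  -- `(right-hand side - left-hand side) / δ²`
  have hlim : Tendsto (fun δ : ℝ => 2 * ((X δ / δ) ^ 2 * conj (E δ)).re
      + 2 * ‖X δ / δ‖ ^ 2 * ‖E δ‖ - ((‖E δ‖ - 1) / δ * (1 + ‖E δ‖)) ^ 2) (𝓝[≠] 0)
      (𝓝 (2 * (w ^ 2 * conj 1).re + 2 * ‖w‖ ^ 2 * ‖(1 : ℂ)‖ - (β * (1 + ‖(1 : ℂ)‖)) ^ 2)) := by
    have hre := (continuous_re.tendsto _).comp
      ((hXs.pow 2).mul ((continuous_conj.tendsto 1).comp hE'))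
    exact ((hre.const_mul 2).add ((hXs.norm.pow 2).const_mul 2 |>.mul hE'.norm)).sub
      ((hnEs.mul (hE'.norm.const_add 1)).pow 2)
  have hpos : 0 < 2 * (w ^ 2 * conj 1).re + 2 * ‖w‖ ^ 2 * ‖(1 : ℂ)‖
      - (β * (1 + ‖(1 : ℂ)‖)) ^ 2 := by
    rw [Complex.sq_norm, normSq_apply, map_one, mul_one, norm_one, sq w, mul_re]
    nlinarith
  filter_upwards [hlim.eventually (eventually_gt_nhds hpos), self_mem_nhdsWithin]
    with δ hδ (hδ0 : δ ≠ 0)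
  set Y := X δ / δ
  have hXY : X δ = (δ : ℂ) * Y := by simp [Y, mul_div_cancel₀, hδ0]
  have hre : (X δ ^ 2 * conj (E δ)).re = δ ^ 2 * (Y ^ 2 * conj (E δ)).re := by
    rw [hXY, mul_pow, mul_assoc, ← ofReal_pow, re_ofReal_mul]
  have hnorm : ‖X δ‖ ^ 2 = δ ^ 2 * ‖Y‖ ^ 2 := by
    rw [hXY, norm_mul, norm_real, Real.norm_eq_abs, mul_pow, sq_abs]
  have hsq : (1 - ‖E δ‖ ^ 2) ^ 2 = δ ^ 2 * ((‖E δ‖ - 1) / δ * (1 + ‖E δ‖)) ^ 2 := by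
    field_simp
    ring
  rw [hre, hnorm, hsq]
  linarith [mul_pos (sq_pos_of_ne_zero hδ0) hδ]

noncomputable def schwarzFactor (c l1 l2 : ℂ) (δ : ℝ) : ℝ :=
  let X : ℂ := c * (exp (-l1 * δ) - exp (-l2 * δ))
  let E : ℂ := exp (-(δ : ℂ) * (l1 + l2))
  let s : ℂ := (X ^ 2 * (X ^ 2 + 4 * E)) ^ (1 / 2 : ℂ)
  max ‖X ^ 2 / 2 + E + s / 2‖ ‖X ^ 2 / 2 + E - s / 2‖

theorem hasDerivAt_mul_exp_sub_exp (c l1 l2 : ℂ) :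
    HasDerivAt (fun δ : ℝ => c * (exp (-l1 * δ) - exp (-l2 * δ))) (c * (l2 - l1)) 0 := by
  have h (l : ℂ) : HasDerivAt (fun δ : ℝ => exp (-l * δ)) (-l) 0 := by
    simpa using ((hasDerivAt_id (0 : ℂ)).const_mul (-l)).cexp.comp_ofReal
  exact (((h l1).sub (h l2)).const_mul c).congr_deriv (by ring)

theorem hasDerivAt_norm_exp_neg_mul (l : ℂ) :
    HasDerivAt (fun δ : ℝ => ‖exp (-(δ : ℂ) * l)‖) (-l.re) 0 := by
  have : (fun δ : ℝ => ‖exp (-(δ : ℂ) * l)‖) = fun δ => Real.exp (-l.re * δ) := by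
    ext δ
    simp [norm_exp, mul_comm]
  rw [this]
  simpa using ((hasDerivAt_id (0 : ℝ)).const_mul (-l.re)).exp

theorem eventually_one_lt_schwarzFactor {c l1 l2 : ℂ}
    (h : |(l1 + l2).re| < |(c * (l2 - l1)).re|) :
    ∀ᶠ δ in 𝓝[≠] 0, 1 < schwarzFactor c l1 l2 δ := by
  have hβ : (-(l1 + l2).re) ^ 2 < (c * (l2 - l1)).re ^ 2 := by
    rw [neg_sq]
    exact sq_lt_sq.2 h
  have hE : ContinuousAt (fun δ : ℝ => exp (-(δ : ℂ) * (l1 + l2))) 0 := by fun_prop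
  have := eventually_sq_one_sub_sq_norm_lt (hasDerivAt_mul_exp_sub_exp c l1 l2)
    (by simp) hE (by simp) (hasDerivAt_norm_exp_neg_mul (l1 + l2)) hβ
  filter_upwards [this] with δ hδ
  dsimp only [schwarzFactor]
  exact one_lt_max_norm_roots (by rw [one_div, cpow_ofNat_inv_pow]) hδ

theorem lt_re_div_mul_sub_mul_I {a b k : ℝ} (ha : 0 < a) (hb : 0 < b) (hbk : b < k) :
    b < ((k ^ 2 + a * I * b) / (k ^ 2 - a * I * b) * (b - a * I)).re := by
  have hden : (k : ℂ) ^ 2 - a * I * b = ⟨k ^ 2, -(a * b)⟩ := by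
    apply Complex.ext <;> simp [← ofReal_pow]
  have hnum : (a : ℂ) ^ 2 * b + a * (2 * b ^ 2 - k ^ 2) * I
      = ⟨a ^ 2 * b, a * (2 * b ^ 2 - k ^ 2)⟩ := by
    apply Complex.ext <;> simp [← ofReal_pow]
  have hden0 : (k : ℂ) ^ 2 - a * I * b ≠ 0 := by
    rw [hden]
    exact fun h => (pow_pos (hb.trans hbk) 2).ne' (congrArg re h)
  have hsplit : (k ^ 2 + a * I * b) / (k ^ 2 - a * I * b) * (b - a * I)
      = b + (a ^ 2 * b + a * (2 * b ^ 2 - k ^ 2) * I) / (k ^ 2 - a * I * b) := by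
    field_simp
    linear_combination (-(a : ℂ) ^ 2 * b) * I_sq
  rw [hsplit, add_re, ofReal_re, lt_add_iff_pos_right, hnum, hden, div_re, normSq_mk, neg_mul_neg,
    ← add_div]
  apply div_pos
  · nlinarith [mul_pos (mul_pos (pow_pos ha 2) hb) (sub_pos.2 (mul_self_lt_mul_self hb.le hbk))]
  · positivity

theorem cpow_one_half_ofReal_of_nonneg {x : ℝ} (hx : 0 ≤ x) :
    (x : ℂ) ^ (1 / 2 : ℂ) = √x := by
  rw [Real.sqrt_eq_rpow, ofReal_cpow hx]
  norm_num

theorem cpow_one_half_ofReal_of_neg {x : ℝ} (hx : x < 0) :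
    (x : ℂ) ^ (1 / 2 : ℂ) = √(-x) * I := by
  rw [ofReal_cpow_of_nonpos hx.le, ← ofReal_neg, cpow_one_half_ofReal_of_nonneg (by linarith)]
  congr 1
  rw [show (Real.pi : ℂ) * I * (1 / 2) = (Real.pi / 2 : ℝ) * I by push_cast; ring, exp_mul_I]
  simp

theorem rhoCla_eq_schwarzFactor {Cp Cs ω k : ℝ} (hs : k ^ 2 < ω ^ 2 / Cs ^ 2)
    (hp : ω ^ 2 / Cp ^ 2 ≤ k ^ 2) (δ : ℝ) :
    rhoCla Cp Cs ω k δ = schwarzFactor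
      ((k ^ 2 + √(ω ^ 2 / Cs ^ 2 - k ^ 2) * I * √(k ^ 2 - ω ^ 2 / Cp ^ 2)) /
        (k ^ 2 - √(ω ^ 2 / Cs ^ 2 - k ^ 2) * I * √(k ^ 2 - ω ^ 2 / Cp ^ 2)))
      (√(ω ^ 2 / Cs ^ 2 - k ^ 2) * I) √(k ^ 2 - ω ^ 2 / Cp ^ 2) δ := by
  rw [rhoCla, schwarzFactor, cpow_one_half_ofReal_of_neg (by linarith),
    cpow_one_half_ofReal_of_nonneg (by linarith), neg_sub]

theorem schwarz_intermediate_frequencies_diverge_general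
    (μ lam ρ ω : ℝ) (hμ : 0 < μ) (hlam : 0 < lam) (hρ : 0 < ρ) (hω : 0 < ω)
    (Cp Cs : ℝ) (hCp : Cp = Real.sqrt ((lam + 2 * μ) / ρ)) (hCs : Cs = Real.sqrt (μ / ρ))
    (k : ℝ)
    (hk : ω / Cp < k ∧ k < ω / Cs) :
    ∃ δ₀ > (0 : ℝ), ∀ δ : ℝ, 0 < δ → δ < δ₀ → 1 < rhoCla Cp Cs ω k δ := by
  obtain ⟨hpk, hks⟩ := hk
  have hCs0 : 0 < Cs := hCs ▸ Real.sqrt_pos.2 (div_pos hμ hρ)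
  have hCp0 : 0 < Cp := hCp ▸ Real.sqrt_pos.2 (div_pos (by linarith) hρ)
  have hk0 : 0 < k := (div_pos hω hCp0).trans hpk
  have hs : k ^ 2 < ω ^ 2 / Cs ^ 2 := div_pow ω Cs 2 ▸ pow_lt_pow_left₀ hks hk0.le two_ne_zero
  have hp : ω ^ 2 / Cp ^ 2 < k ^ 2 :=
    div_pow ω Cp 2 ▸ pow_lt_pow_left₀ hpk (div_pos hω hCp0).le two_ne_zero
  set a := √(ω ^ 2 / Cs ^ 2 - k ^ 2)
  set b := √(k ^ 2 - ω ^ 2 / Cp ^ 2)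
  have ha : 0 < a := Real.sqrt_pos.2 (sub_pos.2 hs)
  have hb : 0 < b := Real.sqrt_pos.2 (sub_pos.2 hp)
  have hbk : b < k := (Real.sqrt_lt' hk0).2 (by linarith [show 0 < ω ^ 2 / Cp ^ 2 by positivity])
  have hre : |(a * I + b).re| < |((k ^ 2 + a * I * b) / (k ^ 2 - a * I * b) * (b - a * I)).re| := by
    rw [add_re, re_ofReal_mul, I_re, mul_zero, zero_add, ofReal_re, abs_of_pos hb]
    exact (lt_re_div_mul_sub_mul_I ha hb hbk).trans_le (le_abs_self _)
  obtain ⟨δ₀, hδ₀, hsub⟩ := mem_nhdsGT_iff_exists_Ioo_subset.1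
    ((eventually_one_lt_schwarzFactor hre).filter_mono
      (nhdsWithin_mono _ fun δ (h : 0 < δ) => h.ne'))
  refine ⟨δ₀, hδ₀, fun δ h0 h1 => ?_⟩
  rw [rhoCla_eq_schwarzFactor hs hp.le]
  exact hsub ⟨h0, h1⟩

/-- for intermediate Fourier frequencies `ω/Cp < k < ω/Cs` (under the
admissibility conditions `k² ± λ₁λ₂ ≠ 0`), the overlapping classical Schwarz method
diverges: `ρ_cla(k, ω, Cp, Cs, δ) > 1` for all sufficiently small overlaps `δ > 0`. -/
theorem schwarz_intermediate_frequencies_diverge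
    (μ lam ρ ω : ℝ) (hμ : 0 < μ) (hlam : 0 < lam) (hρ : 0 < ρ) (hω : 0 < ω)
    (Cp Cs : ℝ) (hCp : Cp = Real.sqrt ((lam + 2 * μ) / ρ)) (hCs : Cs = Real.sqrt (μ / ρ))
    (k : ℝ)
    (l1 l2 : ℂ)
    (hl1 : l1 = ((k ^ 2 - ω ^ 2 / Cs ^ 2 : ℝ) : ℂ) ^ (1 / 2 : ℂ))
    (hl2 : l2 = ((k ^ 2 - ω ^ 2 / Cp ^ 2 : ℝ) : ℂ) ^ (1 / 2 : ℂ))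
    (hk : ω / Cp < k ∧ k < ω / Cs)
    (hadmp : (k : ℂ) ^ 2 + l1 * l2 ≠ 0) (hadmm : (k : ℂ) ^ 2 - l1 * l2 ≠ 0) :
    ∃ δ₀ > (0 : ℝ), ∀ δ : ℝ, 0 < δ → δ < δ₀ → 1 < rhoCla Cp Cs ω k δ :=
  schwarz_intermediate_frequencies_diverge_general μ lam ρ ω hμ hlam hρ hω Cp Cs hCp hCs k hk
end

section
/- For every Fourier frequency k with k > ω/Cs, there exists δ₀ > 0 such that for all overlaps δ with 0 < δ < δ₀, the convergence factor of the classical Schwarz method satisfies ρ_cla(k, ω, Cp, Cs, δ) < 1; i.e., the overlapping classical Schwarz method applied to the time-harmonic Navier equations converges on the high (evanescent) frequencies. -/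
/-! When `k > ω/Cs`, `λ₁ < λ₂` are positive reals, so `X ≥ 0` and `E = e^{-δ(λ₁+λ₂)}` are
real and `r±` are the roots of `r² - (X² + 2E) r + E² = 0`; these lie in `[0, 1)` once `X < 1 - E`.
Both sides of that inequality vanish at `δ = 0`, and with `c = (k² + λ₁λ₂)/(k² - λ₁λ₂)` the
slopes satisfy `c (λ₂ - λ₁) < λ₁ + λ₂`, which reduces to `λ₂² < k²`. -/

open Complex

open Filter Topology Real

/-- The larger modulus of the two roots of `r² - (X² + 2E) r + E² = 0`. -/
noncomputable def maxAbsRoot (X E : ℝ) : ℝ :=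
  max |X ^ 2 / 2 + E + √(X ^ 2 * (X ^ 2 + 4 * E)) / 2|
    |X ^ 2 / 2 + E - √(X ^ 2 * (X ^ 2 + 4 * E)) / 2|

theorem maxAbsRoot_lt_one {X E : ℝ} (hE : 0 ≤ E) (hX : |X| < 1 - E) : maxAbsRoot X E < 1 := by
  have hX2 : X ^ 2 < (1 - E) ^ 2 := sq_lt_sq' (abs_lt.1 hX).1 (abs_lt.1 hX).2
  set s := √(X ^ 2 * (X ^ 2 + 4 * E))
  have hs_le : s ≤ X ^ 2 + 2 * E :=
    Real.sqrt_le_iff.2 ⟨by positivity, by nlinarith [sq_nonneg E, sq_nonneg X]⟩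
  have hs_lt : s < 2 - X ^ 2 - 2 * E :=
    (Real.sqrt_lt' (by nlinarith [abs_nonneg X])).2 (by nlinarith)
  have hs0 : 0 ≤ s := Real.sqrt_nonneg _
  exact max_lt (abs_lt.2 ⟨by linarith, by linarith⟩) (abs_lt.2 ⟨by linarith, by linarith⟩)

theorem div_mul_sub_lt_add_of_sq_lt {a b k : ℝ} (ha : 0 < a) (hbk : b ^ 2 < k ^ 2)
    (habk : a * b < k ^ 2) : (k ^ 2 + a * b) / (k ^ 2 - a * b) * (b - a) < a + b := by
  rw [div_mul_eq_mul_div, div_lt_iff₀ (sub_pos.2 habk)]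
  nlinarith

theorem eventually_mul_exp_sub_exp_lt {a b c : ℝ} (hc : c * (b - a) < a + b) :
    ∀ᶠ δ in 𝓝[>] (0 : ℝ), c * (rexp (-a * δ) - rexp (-b * δ)) < 1 - rexp (-(a + b) * δ) := by
  let g : ℝ → ℝ := fun δ ↦ 1 - rexp (-(a + b) * δ) - c * (rexp (-a * δ) - rexp (-b * δ))
  have hexp (t : ℝ) : HasDerivAt (fun δ ↦ rexp (t * δ)) t 0 := by
    simpa using ((hasDerivAt_id (0 : ℝ)).const_mul t).exp
  have hg : HasDerivAt g (a + b - c * (b - a)) 0 :=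
    (((hasDerivAt_const 0 1).sub (hexp (-(a + b)))).sub
      (((hexp (-a)).sub (hexp (-b))).const_mul c)).congr_deriv (by ring)
  have hsign := eventually_nhdsWithin_sign_eq_of_deriv_pos (hg.deriv ▸ sub_pos.2 hc)
    (by simp [g])
  filter_upwards [nhdsWithin_le_nhds hsign, self_mem_nhdsWithin] with δ hδ (hδ0 : 0 < δ)
  rw [sub_zero, sign_pos hδ0, sign_eq_one_iff] at hδ
  linarith

theorem ofReal_cpow_half {x : ℝ} (hx : 0 ≤ x) : (x : ℂ) ^ (1 / 2 : ℂ) = ((√x : ℝ) : ℂ) := by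
  rw [Real.sqrt_eq_rpow, ofReal_cpow hx]
  norm_num

theorem rhoCla_eq_maxAbsRoot {Cp Cs ω k δ a b : ℝ} (ha : 0 ≤ a) (hb : 0 ≤ b)
    (ha2 : a ^ 2 = k ^ 2 - ω ^ 2 / Cs ^ 2) (hb2 : b ^ 2 = k ^ 2 - ω ^ 2 / Cp ^ 2) :
    rhoCla Cp Cs ω k δ = maxAbsRoot ((k ^ 2 + a * b) / (k ^ 2 - a * b) *
      (rexp (-a * δ) - rexp (-b * δ))) (rexp (-(a + b) * δ)) := by
  set X := (k ^ 2 + a * b) / (k ^ 2 - a * b) * (rexp (-a * δ) - rexp (-b * δ))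
  set E := rexp (-(a + b) * δ)
  have hl1 : ((k ^ 2 - ω ^ 2 / Cs ^ 2 : ℝ) : ℂ) ^ (1 / 2 : ℂ) = a := by
    rw [← ha2, ofReal_cpow_half (sq_nonneg a), Real.sqrt_sq ha]
  have hl2 : ((k ^ 2 - ω ^ 2 / Cp ^ 2 : ℝ) : ℂ) ^ (1 / 2 : ℂ) = b := by
    rw [← hb2, ofReal_cpow_half (sq_nonneg b), Real.sqrt_sq hb]
  have hX : ((k : ℂ) ^ 2 + a * b) / ((k : ℂ) ^ 2 - a * b) * (cexp (-a * δ) - cexp (-b * δ))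
      = X := by
    push_cast [X, ofReal_exp]; ring
  have hE : cexp (-(δ : ℂ) * (a + b)) = E := by
    push_cast [E, ofReal_exp]; ring_nf
  have hs : ((X : ℂ) ^ 2 * ((X : ℂ) ^ 2 + 4 * E)) ^ (1 / 2 : ℂ)
      = ((√(X ^ 2 * (X ^ 2 + 4 * E)) : ℝ) : ℂ) := by
    rw [← ofReal_cpow_half (by positivity)]
    push_cast; rfl
  simp only [rhoCla, hl1, hl2, hX, hE, hs, maxAbsRoot, ← Real.norm_eq_abs, ← norm_real]
  push_cast; rfl

theorem eventually_rhoCla_lt_one {Cp Cs ω k : ℝ} (hω : 0 < ω) (hCs : 0 < Cs) (hCsCp : Cs < Cp)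
    (hk : ω / Cs < k) : ∀ᶠ δ in 𝓝[>] (0 : ℝ), rhoCla Cp Cs ω k δ < 1 := by
  have hωCp : ω ^ 2 / Cp ^ 2 < ω ^ 2 / Cs ^ 2 := by gcongr
  have hA : 0 < k ^ 2 - ω ^ 2 / Cs ^ 2 := by
    rw [sub_pos, ← div_pow]
    exact pow_lt_pow_left₀ hk (by positivity) two_ne_zero
  have hB : 0 < k ^ 2 - ω ^ 2 / Cp ^ 2 := hA.trans (by linarith)
  set a := √(k ^ 2 - ω ^ 2 / Cs ^ 2)
  set b := √(k ^ 2 - ω ^ 2 / Cp ^ 2)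
  have ha : 0 < a := Real.sqrt_pos.2 hA
  have hab : a < b := Real.sqrt_lt_sqrt hA.le (by linarith)
  have hbk : b ^ 2 < k ^ 2 := by
    rw [Real.sq_sqrt hB.le, sub_lt_self_iff]
    exact div_pos (pow_pos hω 2) (pow_pos (hCs.trans hCsCp) 2)
  have habk : a * b < k ^ 2 := by nlinarith
  have hc : 0 ≤ (k ^ 2 + a * b) / (k ^ 2 - a * b) := by
    have := sub_pos.2 habk
    positivity
  filter_upwards [eventually_mul_exp_sub_exp_lt (div_mul_sub_lt_add_of_sq_lt ha hbk habk),
    self_mem_nhdsWithin] with δ hδ (hδ0 : 0 < δ)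
  rw [rhoCla_eq_maxAbsRoot ha.le (ha.trans hab).le (Real.sq_sqrt hA.le) (Real.sq_sqrt hB.le)]
  have hX0 : 0 ≤ (k ^ 2 + a * b) / (k ^ 2 - a * b) * (rexp (-a * δ) - rexp (-b * δ)) :=
    mul_nonneg hc (sub_nonneg.2 (Real.exp_le_exp.2 (by nlinarith)))
  exact maxAbsRoot_lt_one (Real.exp_pos _).le ((abs_of_nonneg hX0).trans_lt hδ)

/-- for high (evanescent) Fourier frequencies `k > ω/Cs`, the overlapping
classical Schwarz method converges: `ρ_cla(k, ω, Cp, Cs, δ) < 1` for all sufficiently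
small overlaps `δ > 0`. -/
theorem schwarz_high_frequencies_converge
    (μ lam ρ ω : ℝ) (hμ : 0 < μ) (hlam : 0 < lam) (hρ : 0 < ρ) (hω : 0 < ω)
    (Cp Cs : ℝ) (hCp : Cp = Real.sqrt ((lam + 2 * μ) / ρ)) (hCs : Cs = Real.sqrt (μ / ρ))
    (k : ℝ) (hk : ω / Cs < k) :
    ∃ δ₀ > (0 : ℝ), ∀ δ : ℝ, 0 < δ → δ < δ₀ → rhoCla Cp Cs ω k δ < 1 := by
  have hCs0 : 0 < Cs := hCs ▸ Real.sqrt_pos.2 (div_pos hμ hρ)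
  have hCsCp : Cs < Cp := hCs ▸ hCp ▸
    Real.sqrt_lt_sqrt (div_pos hμ hρ).le (div_lt_div_of_pos_right (by linarith) hρ)
  obtain ⟨δ₀, hδ₀, h⟩ :=
    (nhdsGT_basis 0).eventually_iff.1 (eventually_rhoCla_lt_one hω hCs0 hCsCp hk)
  exact ⟨δ₀, hδ₀, fun δ hδ0 hδ₁ ↦ h ⟨hδ0, hδ₁⟩⟩
end
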